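/- arXiv:1602.03571 — 2 statements merged into one kernel-verified Lean document; each statement's English description precedes it below -/
import Mathlib

section
/- Let γ(x), x ∈ X, be i.i.d. zero-mean Gumbel random variables over a finite set X, θ : X → ℝ, and let x* = argmax_{x∈X} {θ(x) + γ(x)} (almost surely unique). Then the entropy of the Gibbs distribution p(x) = exp(θ(x))/Z(θ) satisfies H(p) = E[γ(x*)], the expected value of the maximizing perturbation. -/
/-!
Split `E[γ(x*)]` according to the winning coordinate: off the null set of ties,
`γ(x*) = ∑ₓ 1{x wins strictly} γ(x)`, and by Fubini the `x`-th term is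
`∫ t ∏_{y ≠ x} G(t + θ x - θ y) dG(t)`. Since `G(t + d) = exp(-e^{-d} e^{-(t+c)})`, the
density `G'(t) ∏_{y ≠ x} G(t + θ x - θ y)` equals `G'(t - log a) / a` with
`a = Z(θ) / exp(θ x) = 1 / p(x)`. As `G` has mean zero (the standard Gumbel law has mean
`-Γ'(1) = c`), that term is `log a / a = -p(x) log p(x)`.
-/

open MeasureTheory Real

/-- Density of the zero-mean Gumbel distribution, whose CDF is `exp (-exp (-(t + c)))`. -/
noncomputable def gumbelPDF (t : ℝ) : ℝ :=
  Real.exp (-(t + Real.eulerMascheroniConstant)) *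
    Real.exp (-Real.exp (-(t + Real.eulerMascheroniConstant)))

/-- The zero-mean Gumbel measure on `ℝ`. -/
noncomputable def gumbel : Measure ℝ :=
  MeasureTheory.volume.withDensity fun t => ENNReal.ofReal (gumbelPDF t)

open Set Filter Topology

local notation "γ₀" => eulerMascheroniConstant

lemma image_exp_neg_univ : (fun s : ℝ => exp (-s)) '' univ = Ioi 0 := by
  rw [image_univ, ← range_exp]
  exact (Equiv.neg ℝ).surjective.range_comp exp

lemma hasDerivWithinAt_exp_neg (s : ℝ) :
    HasDerivWithinAt (fun s : ℝ => exp (-s)) (-exp (-s)) univ s := by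
  simpa using (hasDerivAt_neg s).exp.hasDerivWithinAt (s := univ)

lemma injOn_exp_neg : InjOn (fun s : ℝ => exp (-s)) univ :=
  fun _ _ _ _ h => neg_injective (exp_injective h)

lemma integral_exp_neg_mul_comp_exp_neg (g : ℝ → ℝ) :
    ∫ s, exp (-s) * g (exp (-s)) = ∫ y in Ioi 0, g y := by
  rw [← image_exp_neg_univ, integral_image_eq_integral_abs_deriv_smul MeasurableSet.univ
    (fun s _ => hasDerivWithinAt_exp_neg s) injOn_exp_neg, Measure.restrict_univ]
  simp [abs_of_pos (exp_pos _)]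

lemma integrable_exp_neg_mul_comp_exp_neg_iff (g : ℝ → ℝ) :
    Integrable (fun s => exp (-s) * g (exp (-s))) ↔ IntegrableOn g (Ioi 0) := by
  rw [← image_exp_neg_univ, integrableOn_image_iff_integrableOn_abs_deriv_smul MeasurableSet.univ
    (fun s _ => hasDerivWithinAt_exp_neg s) injOn_exp_neg, integrableOn_univ]
  simp [abs_of_pos (exp_pos _)]

lemma abs_log_le_two_mul_rpow_add_self (y : ℝ) (hy : 0 < y) :
    |log y| ≤ 2 * y ^ (-(1 / 2 : ℝ)) + y := by
  rcases le_total y 1 with h | h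
  · have hlt := abs_log_mul_self_rpow_lt y (1 / 2) hy h (by norm_num)
    rw [abs_mul, abs_of_pos (rpow_pos_of_pos hy _)] at hlt
    have : |log y| < 2 * y ^ (-(1 / 2 : ℝ)) := by
      rw [rpow_neg hy.le, ← div_eq_mul_inv, lt_div_iff₀ (rpow_pos_of_pos hy _)]
      linarith
    linarith [rpow_pos_of_pos hy (-(1 / 2 : ℝ))]
  · rw [abs_of_nonneg (log_nonneg h)]
    linarith [log_le_sub_one_of_pos hy, rpow_pos_of_pos hy (-(1 / 2 : ℝ))]

lemma integrableOn_log_mul_exp_neg : IntegrableOn (fun y => log y * exp (-y)) (Ioi 0) := by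
  have hbound : IntegrableOn (fun y => 2 * (exp (-y) * y ^ ((1 / 2 : ℝ) - 1)) +
      exp (-y) * y ^ ((2 : ℝ) - 1)) (Ioi 0) :=
    ((GammaIntegral_convergent (by norm_num)).const_mul 2).add
      (GammaIntegral_convergent (by norm_num))
  refine hbound.mono' (by fun_prop) ?_
  filter_upwards [self_mem_ae_restrict measurableSet_Ioi] with y (hy : 0 < y)
  rw [norm_mul, norm_of_nonneg (exp_pos _).le, Real.norm_eq_abs]
  have h := mul_le_mul_of_nonneg_right (abs_log_le_two_mul_rpow_add_self y hy) (exp_pos (-y)).le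
  norm_num at h ⊢
  linarith

-- `Γ'(1) = -γ`, where `Γ'` is computed by differentiating under the Gamma integral.
lemma integral_log_mul_exp_neg : ∫ y in Ioi 0, log y * exp (-y) = -γ₀ := by
  have hGamma : HasDerivAt Complex.GammaIntegral (-γ₀ : ℂ) 1 := by
    refine Complex.hasDerivAt_Gamma_one.congr_of_eventuallyEq ?_
    filter_upwards [(isOpen_lt continuous_const Complex.continuous_re).mem_nhds
      (show (0 : ℝ) < (1 : ℂ).re by simp)] with s hs
    exact (Complex.Gamma_eq_integral hs).symm
  have h := (Complex.hasDerivAt_GammaIntegral (s := 1) (by simp)).unique hGamma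
  simp only [sub_self, Complex.cpow_zero, one_mul, ← Complex.ofReal_mul] at h
  exact_mod_cast h

lemma integrable_exp_neg_mul_exp_neg_exp_neg :
    Integrable fun s => exp (-s) * exp (-exp (-s)) :=
  (integrable_exp_neg_mul_comp_exp_neg_iff fun y => exp (-y)).2 <| by
    simpa using exp_neg_integrableOn_Ioi 0 one_pos

lemma integral_exp_neg_mul_exp_neg_exp_neg : ∫ s, exp (-s) * exp (-exp (-s)) = 1 := by
  rw [integral_exp_neg_mul_comp_exp_neg (fun y => exp (-y)), integral_exp_neg_Ioi_zero]

lemma integrable_mul_exp_neg_mul_exp_neg_exp_neg :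
    Integrable fun s => s * (exp (-s) * exp (-exp (-s))) := by
  refine ((integrable_exp_neg_mul_comp_exp_neg_iff fun y => -(log y * exp (-y))).2
    integrableOn_log_mul_exp_neg.neg).congr (Eventually.of_forall fun s => ?_)
  simp only [log_exp]
  ring

lemma integral_mul_exp_neg_mul_exp_neg_exp_neg :
    ∫ s, s * (exp (-s) * exp (-exp (-s))) = γ₀ := by
  have h := integral_exp_neg_mul_comp_exp_neg fun y => -(log y * exp (-y))
  simp only [log_exp, integral_neg, integral_log_mul_exp_neg, neg_neg] at h
  rw [← h]
  congr 1 with s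
  ring

lemma gumbelPDF_nonneg (t : ℝ) : 0 ≤ gumbelPDF t := by
  unfold gumbelPDF; positivity

lemma measurable_gumbelPDF : Measurable gumbelPDF := by
  unfold gumbelPDF; fun_prop

lemma integrable_gumbelPDF : Integrable gumbelPDF :=
  integrable_exp_neg_mul_exp_neg_exp_neg.comp_add_right γ₀

lemma integral_gumbelPDF : ∫ t, gumbelPDF t = 1 :=
  (integral_add_right_eq_self (fun s => exp (-s) * exp (-exp (-s))) γ₀).trans
    integral_exp_neg_mul_exp_neg_exp_neg

lemma mul_gumbelPDF (t : ℝ) : t * gumbelPDF t =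
    (t + γ₀) * (exp (-(t + γ₀)) * exp (-exp (-(t + γ₀)))) -
      γ₀ * (exp (-(t + γ₀)) * exp (-exp (-(t + γ₀)))) := by
  rw [gumbelPDF]; ring

lemma integrable_mul_gumbelPDF : Integrable fun t => t * gumbelPDF t := by
  simp only [mul_gumbelPDF]
  exact (integrable_mul_exp_neg_mul_exp_neg_exp_neg.comp_add_right γ₀).sub
    ((integrable_exp_neg_mul_exp_neg_exp_neg.comp_add_right γ₀).const_mul γ₀)

lemma integral_mul_gumbelPDF : ∫ t, t * gumbelPDF t = 0 := by
  simp only [mul_gumbelPDF]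
  rw [integral_sub (integrable_mul_exp_neg_mul_exp_neg_exp_neg.comp_add_right γ₀)
    ((integrable_exp_neg_mul_exp_neg_exp_neg.comp_add_right γ₀).const_mul γ₀), integral_const_mul,
    integral_add_right_eq_self (fun s => s * (exp (-s) * exp (-exp (-s)))),
    integral_add_right_eq_self (fun s => exp (-s) * exp (-exp (-s))),
    integral_mul_exp_neg_mul_exp_neg_exp_neg, integral_exp_neg_mul_exp_neg_exp_neg]
  ring

noncomputable def gumbelCDF (t : ℝ) : ℝ := exp (-exp (-(t + γ₀)))

lemma hasDerivAt_gumbelCDF (t : ℝ) : HasDerivAt gumbelCDF (gumbelPDF t) t := by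
  unfold gumbelCDF
  convert (((hasDerivAt_id' t).add_const γ₀).fun_neg.exp.fun_neg).exp using 1
  rw [gumbelPDF]
  ring

lemma tendsto_gumbelCDF_atBot : Tendsto gumbelCDF atBot (𝓝 0) :=
  tendsto_exp_atBot.comp <| tendsto_neg_atTop_atBot.comp <| tendsto_exp_atTop.comp <|
    tendsto_neg_atBot_atTop.comp <| tendsto_atBot_add_const_right _ γ₀ tendsto_id

lemma integral_Iic_gumbelPDF (b : ℝ) : ∫ t in Iic b, gumbelPDF t = gumbelCDF b := by
  rw [integral_Iic_of_hasDerivAt_of_tendsto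
    (hasDerivAt_gumbelCDF b).continuousAt.continuousWithinAt (fun t _ => hasDerivAt_gumbelCDF t)
    integrable_gumbelPDF.integrableOn tendsto_gumbelCDF_atBot, sub_zero]

lemma gumbel_apply {s : Set ℝ} (hs : MeasurableSet s) :
    gumbel s = ENNReal.ofReal (∫ t in s, gumbelPDF t) := by
  rw [gumbel, withDensity_apply _ hs, ofReal_integral_eq_lintegral_ofReal
    integrable_gumbelPDF.integrableOn (Eventually.of_forall gumbelPDF_nonneg)]

instance : IsProbabilityMeasure gumbel :=
  ⟨by rw [gumbel_apply MeasurableSet.univ, Measure.restrict_univ, integral_gumbelPDF,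
    ENNReal.ofReal_one]⟩

instance : NullSingletonClass gumbel :=
  ⟨fun _ => withDensity_absolutelyContinuous _ _ (measure_singleton _)⟩

lemma gumbel_real_Iio (b : ℝ) : gumbel.real (Iio b) = gumbelCDF b := by
  rw [measureReal_def, gumbel_apply measurableSet_Iio, setIntegral_congr_set Iio_ae_eq_Iic,
    integral_Iic_gumbelPDF, gumbelCDF, ENNReal.toReal_ofReal (exp_pos _).le]

lemma integral_gumbel (g : ℝ → ℝ) : ∫ t, g t ∂gumbel = ∫ t, gumbelPDF t * g t := by
  rw [gumbel, integral_withDensity_eq_integral_toReal_smul measurable_gumbelPDF.ennreal_ofReal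
    (Eventually.of_forall fun _ => ENNReal.ofReal_lt_top)]
  simp only [ENNReal.toReal_ofReal (gumbelPDF_nonneg _), smul_eq_mul]

lemma integrable_gumbel_iff (g : ℝ → ℝ) :
    Integrable g gumbel ↔ Integrable fun t => gumbelPDF t * g t := by
  rw [gumbel, integrable_withDensity_iff_integrable_smul' measurable_gumbelPDF.ennreal_ofReal
    (Eventually.of_forall fun _ => ENNReal.ofReal_lt_top)]
  simp only [ENNReal.toReal_ofReal (gumbelPDF_nonneg _), smul_eq_mul]

lemma integrable_id_gumbel : Integrable (fun t => t) gumbel := by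
  rw [integrable_gumbel_iff]
  simpa only [mul_comm] using integrable_mul_gumbelPDF

lemma integral_mul_gumbelPDF_sub (c : ℝ) : ∫ t, t * gumbelPDF (t - c) = c := by
  have h := integral_sub_right_eq_self (μ := volume) (fun t => (t + c) * gumbelPDF t) c
  simp only [sub_add_cancel, add_mul] at h
  rw [h, integral_add integrable_mul_gumbelPDF (integrable_gumbelPDF.const_mul c),
    integral_mul_gumbelPDF, integral_const_mul, integral_gumbelPDF]
  ring

lemma prod_gumbelCDF_add {ι : Type*} (s : Finset ι) (d : ι → ℝ) (t : ℝ) :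
    ∏ i ∈ s, gumbelCDF (t + d i) = exp (-((∑ i ∈ s, exp (-d i)) * exp (-(t + γ₀)))) := by
  rw [Finset.sum_mul, ← Finset.sum_neg_distrib, exp_sum]
  refine Finset.prod_congr rfl fun i _ => ?_
  rw [gumbelCDF, mul_comm, ← exp_add]
  ring_nf

lemma gumbelPDF_sub_log {a : ℝ} (ha : 0 < a) (t : ℝ) :
    gumbelPDF (t - log a) = a * (exp (-(t + γ₀)) * exp (-(a * exp (-(t + γ₀))))) := by
  have h : exp (-(t - log a + γ₀)) = a * exp (-(t + γ₀)) := by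
    rw [← exp_log ha, ← exp_add, log_exp]
    ring_nf
  rw [gumbelPDF, h]
  ring

-- Max-stability of the Gumbel law: the density of a winner against shifted Gumbel competitors
-- is again a shifted Gumbel density.
lemma gumbelPDF_mul_prod_gumbelCDF_add {ι : Type*} (s : Finset ι) (d : ι → ℝ) (t : ℝ) :
    gumbelPDF t * ∏ i ∈ s, gumbelCDF (t + d i) =
      gumbelPDF (t - log (1 + ∑ i ∈ s, exp (-d i))) / (1 + ∑ i ∈ s, exp (-d i)) := by
  have ha : 0 < 1 + ∑ i ∈ s, exp (-d i) := by positivity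
  rw [gumbelPDF_sub_log ha, prod_gumbelCDF_add, gumbelPDF, mul_div_cancel_left₀ _ ha.ne',
    mul_assoc, ← exp_add]
  ring_nf

lemma integral_mul_prod_gumbelCDF_add {ι : Type*} (s : Finset ι) (d : ι → ℝ) :
    ∫ t, t * ∏ i ∈ s, gumbelCDF (t + d i) ∂gumbel =
      log (1 + ∑ i ∈ s, exp (-d i)) / (1 + ∑ i ∈ s, exp (-d i)) := by
  simp only [integral_gumbel, mul_left_comm (gumbelPDF _), gumbelPDF_mul_prod_gumbelCDF_add,
    ← mul_div_assoc, integral_div, integral_mul_gumbelPDF_sub]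

noncomputable def MeasurableEquiv.funSplitAt {ι : Type*} [DecidableEq ι] (i : ι) (α : Type*)
    [MeasurableSpace α] : (ι → α) ≃ᵐ α × ({ j // j ≠ i } → α) :=
  (MeasurableEquiv.piEquivPiSubtypeProd (fun _ => α) (· = i)).trans
    ((MeasurableEquiv.piUnique fun _ => α).prodCongr (MeasurableEquiv.refl _))

@[simp]
lemma MeasurableEquiv.funSplitAt_apply {ι α : Type*} [DecidableEq ι] [MeasurableSpace α] (i : ι)
    (f : ι → α) : MeasurableEquiv.funSplitAt i α f = (f i, fun j : { j // j ≠ i } => f j) :=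
  rfl

lemma measurePreserving_funSplitAt {ι α : Type*} [Fintype ι] [DecidableEq ι] [MeasurableSpace α]
    (μ : Measure α) [SigmaFinite μ] (i : ι) :
    MeasurePreserving (MeasurableEquiv.funSplitAt i α) (Measure.pi fun _ => μ)
      (μ.prod (Measure.pi fun _ => μ)) := by
  -- the instance `measurePreserving_piEquivPiSubtypeProd` uses, rather than `Fintype.subtypeEq`
  let : Fintype { j // j = i } := Subtype.fintype _
  exact ((measurePreserving_piUnique _).prod (MeasurePreserving.id _)).comp
    (measurePreserving_piEquivPiSubtypeProd (fun _ => μ) (· = i))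

lemma measurableSet_forall_snd_lt {κ : Type*} [Countable κ] (d : κ → ℝ) :
    MeasurableSet {p : ℝ × (κ → ℝ) | ∀ y, p.2 y < p.1 + d y} := by
  simp only [ofPred_forall]
  exact MeasurableSet.iInter fun y => measurableSet_lt measurable_snd.eval
    (measurable_fst.add_const _)

def strictArgmaxSet {ι : Type*} (θ : ι → ℝ) (x : ι) : Set (ι → ℝ) :=
  {γ | ∀ y ≠ x, θ y + γ y < θ x + γ x}

lemma indicator_strictArgmaxSet_eq_comp {ι : Type*} [DecidableEq ι] (θ : ι → ℝ) (x : ι)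
    (f : ℝ → ℝ) :
    (strictArgmaxSet θ x).indicator (fun γ => f (γ x)) =
      {p : ℝ × ({ y // y ≠ x } → ℝ) | ∀ y, p.2 y < p.1 + (θ x - θ y)}.indicator (fun p => f p.1) ∘
        MeasurableEquiv.funSplitAt x ℝ := by
  ext γ
  rw [Function.comp_apply, ← indicator_comp_right]
  congr 1
  ext γ
  simp only [strictArgmaxSet, mem_ofPred_eq, mem_preimage, MeasurableEquiv.funSplitAt_apply,
    Subtype.forall]
  exact forall₂_congr fun y _ => by constructor <;> intro h <;> linarith

section PerturbedArgmax

variable {ι : Type*} [Fintype ι] (μ : Measure ℝ) (θ : ι → ℝ)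

lemma pi_setOf_add_eq_add_eq_zero [SigmaFinite μ] [NullSingletonClass μ] {y z : ι} (hyz : y ≠ z) :
    Measure.pi (fun _ => μ) {γ : ι → ℝ | θ y + γ y = θ z + γ z} = 0 := by
  classical
  have hsplit : {γ : ι → ℝ | θ y + γ y = θ z + γ z} = MeasurableEquiv.funSplitAt z ℝ ⁻¹'
      {p | p.2 ⟨y, hyz⟩ = p.1 + (θ z - θ y)} := by
    ext γ
    simp only [mem_ofPred_eq, mem_preimage, MeasurableEquiv.funSplitAt_apply]
    constructor <;> intro h <;> linarith
  have hmeas : MeasurableSet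
      {p : ℝ × ({ j // j ≠ z } → ℝ) | p.2 ⟨y, hyz⟩ = p.1 + (θ z - θ y)} :=
    measurableSet_eq_fun measurable_snd.eval (measurable_fst.add_const _)
  rw [hsplit, (measurePreserving_funSplitAt μ z).measure_preimage hmeas.nullMeasurableSet,
    Measure.prod_apply hmeas]
  simp only [preimage_ofPred_eq, Measure.pi_hyperplane, lintegral_zero]

lemma ae_add_ne_add [SigmaFinite μ] [NullSingletonClass μ] :
    ∀ᵐ γ ∂(Measure.pi fun _ => μ), ∀ y z, y ≠ z → θ y + γ y ≠ θ z + γ z := by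
  refine ae_all_iff.2 fun y => ae_all_iff.2 fun z => ?_
  by_cases hyz : y = z
  · exact Eventually.of_forall fun _ h => absurd hyz h
  · filter_upwards [measure_eq_zero_iff_ae_notMem.1 (pi_setOf_add_eq_add_eq_zero μ θ hyz)]
      with γ hγ _ using hγ

variable [IsProbabilityMeasure μ]

lemma integrable_indicator_strictArgmaxSet (x : ι) {f : ℝ → ℝ} (hf : Integrable f μ) :
    Integrable ((strictArgmaxSet θ x).indicator fun γ => f (γ x)) (Measure.pi fun _ => μ) := by
  classical
  rw [indicator_strictArgmaxSet_eq_comp, (measurePreserving_funSplitAt μ x).integrable_comp_emb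
    (MeasurableEquiv.funSplitAt x ℝ).measurableEmbedding]
  exact (hf.comp_fst _).indicator (measurableSet_forall_snd_lt _)

lemma integral_indicator_strictArgmaxSet [DecidableEq ι] (x : ι) {f : ℝ → ℝ}
    (hf : Integrable f μ) :
    ∫ γ, (strictArgmaxSet θ x).indicator (fun γ => f (γ x)) γ ∂(Measure.pi fun _ => μ) =
      ∫ t, f t * ∏ y : { y // y ≠ x }, μ.real (Iio (t + (θ x - θ y))) ∂μ := by
  have hB := measurableSet_forall_snd_lt (κ := { y // y ≠ x }) fun y => θ x - θ y
  rw [indicator_strictArgmaxSet_eq_comp, Function.comp_def,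
    (measurePreserving_funSplitAt μ x).integral_comp',
    integral_prod _ ((hf.comp_fst _).indicator hB)]
  refine integral_congr_ae (Eventually.of_forall fun t => ?_)
  have hslice :
      Prod.mk t ⁻¹' {p : ℝ × ({ y // y ≠ x } → ℝ) | ∀ y, p.2 y < p.1 + (θ x - θ y)} =
        univ.pi fun y : { y // y ≠ x } => Iio (t + (θ x - θ y)) := by
    ext r; simp
  simp only [← indicator_comp_right, Function.comp_def]
  rw [hslice, integral_indicator_const _ (MeasurableSet.univ_pi fun _ => measurableSet_Iio),
    measureReal_def, Measure.pi_pi, ENNReal.toReal_prod, smul_eq_mul, mul_comm]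
  simp only [measureReal_def]

end PerturbedArgmax

lemma sum_indicator_strictArgmaxSet {ι : Type*} [Fintype ι] (θ γ : ι → ℝ) {x₀ : ι}
    (hmax : ∀ x, θ x + γ x ≤ θ x₀ + γ x₀) (hties : ∀ y ≠ x₀, θ y + γ y ≠ θ x₀ + γ x₀) :
    ∑ x, (strictArgmaxSet θ x).indicator (fun γ => γ x) γ = γ x₀ := by
  rw [Finset.sum_eq_single_of_mem x₀ (Finset.mem_univ _), indicator_of_mem]
  · exact fun y hy => (hmax y).lt_of_ne (hties y hy)
  · exact fun x _ hx => indicator_of_notMem (fun hγ => (hγ x₀ (Ne.symm hx)).not_ge (hmax x)) _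

lemma one_add_sum_exp_neg_sub {ι : Type*} [Fintype ι] [DecidableEq ι] (θ : ι → ℝ) (x : ι) :
    1 + ∑ y : { y // y ≠ x }, exp (-(θ x - θ y)) = (exp (θ x) / ∑ y, exp (θ y))⁻¹ := by
  rw [inv_div, Fintype.sum_eq_add_sum_subtype_ne (fun y => exp (θ y)) x, add_div,
    div_self (exp_pos _).ne', Finset.sum_div]
  simp only [neg_sub, exp_sub]

theorem stmt_2_general {X : Type} [Fintype X] (θ : X → ℝ)
    (xstar : (X → ℝ) → X)
    (hmax : ∀ γ : X → ℝ, ∀ x : X, θ x + γ x ≤ θ (xstar γ) + γ (xstar γ)) :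
    (-∑ x : X, (Real.exp (θ x) / ∑ y : X, Real.exp (θ y)) *
        Real.log (Real.exp (θ x) / ∑ y : X, Real.exp (θ y)))
      = ∫ γ : X → ℝ, γ (xstar γ) ∂(Measure.pi fun _ : X => gumbel) := by
  classical
  have hae : (fun γ => γ (xstar γ)) =ᵐ[Measure.pi fun _ : X => gumbel]
      fun γ => ∑ x, (strictArgmaxSet θ x).indicator (fun γ => γ x) γ := by
    filter_upwards [ae_add_ne_add gumbel θ] with γ hγ
    exact (sum_indicator_strictArgmaxSet θ γ (hmax γ) fun y hy => hγ y _ hy).symm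
  rw [integral_congr_ae hae, ← Finset.sum_neg_distrib, integral_finsetSum _ fun x _ =>
    integrable_indicator_strictArgmaxSet gumbel θ x integrable_id_gumbel]
  refine Finset.sum_congr rfl fun x _ => ?_
  rw [integral_indicator_strictArgmaxSet gumbel θ x integrable_id_gumbel]
  simp only [gumbel_real_Iio, integral_mul_prod_gumbelCDF_add, one_add_sum_exp_neg_sub, log_inv,
    div_inv_eq_mul]
  ring

/-- The entropy of the Gibbs distribution equals the expected value of the
maximizing perturbation: `H(p) = E[γ(x*)]` where `x*` maximizes `θ x + γ x`. -/
theorem stmt_2 {X : Type} [Fintype X] [Nonempty X] (θ : X → ℝ)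
    (xstar : (X → ℝ) → X)
    (hmax : ∀ γ : X → ℝ, ∀ x : X, θ x + γ x ≤ θ (xstar γ) + γ (xstar γ)) :
    (-∑ x : X, (Real.exp (θ x) / ∑ y : X, Real.exp (θ y)) *
        Real.log (Real.exp (θ x) / ∑ y : X, Real.exp (θ y)))
      = ∫ γ : X → ℝ, γ (xstar γ) ∂(Measure.pi fun _ : X => gumbel) :=
  stmt_2_general θ xstar hmax
end

section
/- Let μ satisfy a Poincaré inequality with constant C: Var_μ(h) ≤ C∫‖∇h‖² dμ for all suitable h. If f has ∫f dμ = 0 and ‖∇f(t)‖ ≤ a < 2/√C, then the functional entropy satisfies Ent_μ(exp f) ≤ (a²C/2)·((2+a√C)/(2-a√C))² · ∫ exp(f) dμ, where Ent_μ(exp f) = ∫ f e^f dμ - (∫ e^f dμ) log(∫ e^f dμ). -/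
/-!
Since `E log E ≥ E - 1` for `E = ∫ e^f`, the entropy is at most
`∫ (f e^f - e^f + 1) = ∫₀¹ s ∫ f² e^{sf} dμ ds`. For each `s`, the Bobkov–Ledoux argument
(Poincaré applied to `e^{g/2}` and `g e^{g/2}` for `g = s f`) gives
`∫ f² e^{sf} ≤ C a² ρ² ∫ e^{sf}` with `ρ = (2 + a√C) / (2 - a√C)`, and convexity of
`s ↦ ∫ e^{sf}` together with Jensen (`∫ e^f ≥ 1`) gives `∫ e^{sf} ≤ ∫ e^f`; integrating `s`
over `(0, 1)` produces the factor `1/2`. As `f` is only assumed integrable, Poincaré is first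
extended to `f` through bounded truncations, which yields `∫ f² ≤ C a²`.
-/

open MeasureTheory Real Filter Topology

section Gradient

variable {ι : Type*} [Fintype ι] [DecidableEq ι]

noncomputable def gradNormSq (h : (ι → ℝ) → ℝ) (t : ι → ℝ) : ℝ :=
  ∑ i, (fderiv ℝ h t (Pi.single i 1)) ^ 2

lemma gradNormSq_nonneg (h : (ι → ℝ) → ℝ) (t : ι → ℝ) : 0 ≤ gradNormSq h t :=
  Finset.sum_nonneg fun _ _ => sq_nonneg _

lemma gradNormSq_comp {φ : ℝ → ℝ} {d : ℝ} {h : (ι → ℝ) → ℝ} {t : ι → ℝ}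
    (hφ : HasDerivAt φ d (h t)) (hh : DifferentiableAt ℝ h t) :
    gradNormSq (fun x => φ (h x)) t = d ^ 2 * gradNormSq h t := by
  have hd : fderiv ℝ (fun x => φ (h x)) t = d • fderiv ℝ h t :=
    (hφ.comp_hasFDerivAt t hh.hasFDerivAt).fderiv
  simp only [gradNormSq, hd, Finset.mul_sum, FunLike.coe_smul, Pi.smul_apply, smul_eq_mul, mul_pow]

lemma gradNormSq_comp_le {φ : ℝ → ℝ} {d a : ℝ} {h : (ι → ℝ) → ℝ} {t : ι → ℝ}
    (hφ : HasDerivAt φ d (h t)) (hh : DifferentiableAt ℝ h t) (hd : d ^ 2 ≤ 1)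
    (hgrad : gradNormSq h t ≤ a ^ 2) :
    gradNormSq (fun x => φ (h x)) t ≤ a ^ 2 := by
  rw [gradNormSq_comp hφ hh]
  nlinarith [gradNormSq_nonneg h t]

def PoincareInequality (μ : Measure (ι → ℝ)) (C : ℝ) : Prop :=
  ∀ h : (ι → ℝ) → ℝ, Differentiable ℝ h → MemLp h 2 μ →
    (∫ t, h t ^ 2 ∂μ) - (∫ t, h t ∂μ) ^ 2 ≤ C * ∫ t, gradNormSq h t ∂μ

end Gradient

lemma sq_mul_exp_mul_le {s : ℝ} (hs0 : 0 ≤ s) (hs1 : s < 1) (x : ℝ) :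
    x ^ 2 * exp (s * x) ≤ x ^ 2 + 2 / (1 - s) ^ 2 * exp x := by
  rcases le_total x 0 with hx | hx
  · have h1 : exp (s * x) ≤ 1 := exp_le_one_iff.2 (mul_nonpos_of_nonneg_of_nonpos hs0 hx)
    have h2 : 0 ≤ 2 / (1 - s) ^ 2 * exp x := by positivity
    nlinarith [mul_le_mul_of_nonneg_left h1 (sq_nonneg x)]
  · have hq := pow_div_factorial_le_exp ((1 - s) * x) (by nlinarith) 2
    have hx2 : x ^ 2 ≤ 2 / (1 - s) ^ 2 * exp ((1 - s) * x) := by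
      rw [div_mul_eq_mul_div, le_div_iff₀ (by nlinarith)]
      simp only [Nat.factorial] at hq
      nlinarith
    calc x ^ 2 * exp (s * x) ≤ 2 / (1 - s) ^ 2 * exp ((1 - s) * x) * exp (s * x) :=
          mul_le_mul_of_nonneg_right hx2 (exp_pos _).le
      _ = 2 / (1 - s) ^ 2 * exp x := by rw [mul_assoc, ← exp_add]; ring_nf
      _ ≤ x ^ 2 + 2 / (1 - s) ^ 2 * exp x := le_add_of_nonneg_left (sq_nonneg x)

lemma exp_mul_le {s : ℝ} (hs0 : 0 ≤ s) (hs1 : s ≤ 1) (x : ℝ) :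
    exp (s * x) ≤ (1 - s) + s * exp x := by
  simpa using convexOn_exp.2 (Set.mem_univ 0) (Set.mem_univ x) (by linarith) hs0 (by ring)

lemma integral_Ioo_mul_sq_mul_exp (x : ℝ) :
    ∫ s in Set.Ioo (0 : ℝ) 1, s * x ^ 2 * exp (s * x) = x * exp x - exp x + 1 := by
  have hderiv : ∀ s ∈ Set.uIcc (0 : ℝ) 1,
      HasDerivAt (fun s => exp (s * x) * (s * x - 1)) (s * x ^ 2 * exp (s * x)) s := fun s _ => by
    have h := hasDerivAt_mul_const (𝕜 := ℝ) x (x := s)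
    exact (h.exp.mul (h.sub_const 1)).congr_deriv (by ring)
  rw [← integral_Ioc_eq_integral_Ioo, ← intervalIntegral.integral_of_le zero_le_one,
    intervalIntegral.integral_eq_sub_of_hasDerivAt hderiv
      ((by fun_prop : Continuous _).intervalIntegrable 0 1)]
  simp only [one_mul, zero_mul, exp_zero]
  ring

section Integrals

variable {α : Type*} [MeasurableSpace α] {μ : Measure α} {f u v : α → ℝ}

lemma sq_integral_mul_le (hu : MemLp u 2 μ) (hv : MemLp v 2 μ) :
    (∫ t, u t * v t ∂μ) ^ 2 ≤ (∫ t, u t ^ 2 ∂μ) * ∫ t, v t ^ 2 ∂μ := by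
  have huv : Integrable (fun t => u t * v t) μ := hu.integrable_mul hv
  have hquad : ∀ x : ℝ, 0 ≤ (∫ t, v t ^ 2 ∂μ) * (x * x)
      + (-2 * ∫ t, u t * v t ∂μ) * x + ∫ t, u t ^ 2 ∂μ := fun x => by
    have hexpand : (fun t => (u t - x * v t) ^ 2)
        = fun t => (x * x) * v t ^ 2 + (-2 * x) * (u t * v t) + u t ^ 2 := by
      ext t; ring
    have h : 0 ≤ ∫ t, (u t - x * v t) ^ 2 ∂μ := integral_nonneg fun t => sq_nonneg _
    have hi : Integrable (fun t => (x * x) * v t ^ 2 + (-2 * x) * (u t * v t)) μ :=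
      (hv.integrable_sq.const_mul _).add (huv.const_mul _)
    rw [hexpand, integral_add hi hu.integrable_sq,
      integral_add (hv.integrable_sq.const_mul _) (huv.const_mul _),
      integral_const_mul, integral_const_mul] at h
    linarith
  have := discrim_le_zero hquad
  rw [discrim] at this
  linarith

lemma integrable_and_integral_le_of_tendsto {F : ℕ → α → ℝ} {b : ℕ → ℝ} {B : ℝ}
    (hF : ∀ n, Integrable (F n) μ) (hF0 : ∀ n, 0 ≤ᵐ[μ] F n)
    (hFf : ∀ᵐ x ∂μ, Tendsto (fun n => F n x) atTop (𝓝 (f x)))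
    (hb : Tendsto b atTop (𝓝 B)) (hFb : ∀ n, ∫ x, F n x ∂μ ≤ b n) :
    Integrable f μ ∧ ∫ x, f x ∂μ ≤ B := by
  have hf : AEStronglyMeasurable f μ :=
    aestronglyMeasurable_of_tendsto_ae _ (fun n => (hF n).1) hFf
  have hf0 : 0 ≤ᵐ[μ] f := by
    filter_upwards [hFf, ae_all_iff.2 hF0] with x hx h0 using ge_of_tendsto' hx h0
  have hB : 0 ≤ B := ge_of_tendsto' hb fun n => (integral_nonneg_of_ae (hF0 n)).trans (hFb n)
  have hfatou : ∫⁻ x, ENNReal.ofReal (f x) ∂μ ≤ ENNReal.ofReal B := calc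
    ∫⁻ x, ENNReal.ofReal (f x) ∂μ
        = ∫⁻ x, liminf (fun n => ENNReal.ofReal (F n x)) atTop ∂μ := by
          refine lintegral_congr_ae ?_
          filter_upwards [hFf] with x hx
          exact ((ENNReal.continuous_ofReal.tendsto _).comp hx).liminf_eq.symm
    _ ≤ liminf (fun n => ∫⁻ x, ENNReal.ofReal (F n x) ∂μ) atTop :=
          lintegral_liminf_le' fun n => (hF n).1.aemeasurable.ennreal_ofReal
    _ = liminf (fun n => ENNReal.ofReal (∫ x, F n x ∂μ)) atTop := by
          simp only [ofReal_integral_eq_lintegral_ofReal (hF _) (hF0 _)]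
    _ ≤ liminf (fun n => ENNReal.ofReal (b n)) atTop :=
          liminf_le_liminf (.of_forall fun n => ENNReal.ofReal_le_ofReal (hFb n))
    _ = ENNReal.ofReal B := ((ENNReal.continuous_ofReal.tendsto B).comp hb).liminf_eq
  refine ⟨⟨hf, (hasFiniteIntegral_iff_ofReal hf0).2 (hfatou.trans_lt ENNReal.ofReal_lt_top)⟩, ?_⟩
  rw [integral_eq_lintegral_of_nonneg_ae hf0 hf]
  exact ENNReal.toReal_le_of_le_ofReal hB hfatou

lemma integrable_sq_mul_exp_mul (hf : Measurable f) (hf2 : Integrable (fun t => f t ^ 2) μ)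
    (hexp : Integrable (fun t => exp (f t)) μ) {s : ℝ} (hs0 : 0 ≤ s) (hs1 : s < 1) :
    Integrable (fun t => f t ^ 2 * exp (s * f t)) μ :=
  (hf2.add (hexp.const_mul _)).mono' (by fun_prop) (.of_forall fun t => by
    rw [norm_of_nonneg (by positivity)]
    exact sq_mul_exp_mul_le hs0 hs1 (f t))

lemma integral_mul_exp_sub_exp_add_one_le [IsFiniteMeasure μ] (hf : Measurable f)
    (hexp : Integrable (fun t => exp (f t)) μ) (hfexp : Integrable (fun t => f t * exp (f t)) μ)
    {B : ℝ} (hB : ∀ s ∈ Set.Ioo (0 : ℝ) 1, ∫ t, f t ^ 2 * exp (s * f t) ∂μ ≤ B) :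
    ∫ t, (f t * exp (f t) - exp (f t) + 1) ∂μ ≤ B / 2 := by
  set F : α → ℝ → ℝ := fun t s => s * f t ^ 2 * exp (s * f t)
  have hF0 : ∀ t, ∀ s ∈ Set.Ioo (0 : ℝ) 1, 0 ≤ F t s := fun t s hs => by
    have := hs.1.le; positivity
  have hid : ∀ t, ∫ s in Set.Ioo (0 : ℝ) 1, F t s = f t * exp (f t) - exp (f t) + 1 :=
    fun t => integral_Ioo_mul_sq_mul_exp (f t)
  have hprod : Integrable (Function.uncurry F) (μ.prod (volume.restrict (Set.Ioo (0 : ℝ) 1))) := by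
    rw [integrable_prod_iff (by fun_prop)]
    refine ⟨.of_forall fun t => ?_, ?_⟩
    · exact ((by fun_prop : Continuous (F t)).integrableOn_Icc).mono_set Set.Ioo_subset_Icc_self
    · refine (((hfexp.sub hexp).add (integrable_const 1))).congr (.of_forall fun t => ?_)
      show f t * exp (f t) - exp (f t) + 1 = ∫ s in Set.Ioo (0 : ℝ) 1, ‖F t s‖
      rw [← hid t]
      exact setIntegral_congr_fun measurableSet_Ioo fun s hs => (norm_of_nonneg (hF0 t s hs)).symm
  calc ∫ t, (f t * exp (f t) - exp (f t) + 1) ∂μ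
      = ∫ t, (∫ s in Set.Ioo (0 : ℝ) 1, F t s) ∂μ :=
        integral_congr_ae (.of_forall fun t => (hid t).symm)
    _ = ∫ s in Set.Ioo (0 : ℝ) 1, ∫ t, F t s ∂μ := integral_integral_swap hprod
    _ ≤ ∫ s in Set.Ioo (0 : ℝ) 1, s * B := by
        refine integral_mono_of_nonneg ((ae_restrict_iff' measurableSet_Ioo).2
          (.of_forall fun s hs => integral_nonneg fun t => hF0 t s hs))
          ((by fun_prop : Continuous fun s : ℝ => s * B).integrableOn_Icc.mono_set
            Set.Ioo_subset_Icc_self) ((ae_restrict_iff' measurableSet_Ioo).2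
          (.of_forall fun s hs => ?_))
        simp only [F, mul_assoc, integral_const_mul]
        exact mul_le_mul_of_nonneg_left (hB s hs) hs.1.le
    _ = B / 2 := by
        rw [← integral_Ioc_eq_integral_Ioo, ← intervalIntegral.integral_of_le zero_le_one,
          intervalIntegral.integral_mul_const, integral_id]
        ring

lemma integrable_exp_mul [IsFiniteMeasure μ] (hf : Measurable f)
    (hexp : Integrable (fun t => exp (f t)) μ) {s : ℝ}
    (hs0 : 0 ≤ s) (hs1 : s ≤ 1) : Integrable (fun t => exp (s * f t)) μ :=
  ((integrable_const (1 - s)).add (hexp.const_mul s)).mono' (by fun_prop) (.of_forall fun t => by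
    rw [norm_of_nonneg (exp_pos _).le]
    exact exp_mul_le hs0 hs1 (f t))

variable [IsProbabilityMeasure μ]

lemma sq_integral_mul_le_of_integral_eq_zero (hu : MemLp u 2 μ) (hu0 : ∫ t, u t ∂μ = 0)
    (hv : MemLp v 2 μ) :
    (∫ t, u t * v t ∂μ) ^ 2 ≤ (∫ t, u t ^ 2 ∂μ) * ((∫ t, v t ^ 2 ∂μ) - (∫ t, v t ∂μ) ^ 2) := by
  set m := ∫ t, v t ∂μ
  have huv : Integrable (fun t => u t * v t) μ := hu.integrable_mul hv
  have hv1 : Integrable (fun t => (2 * m) * v t) μ := (hv.integrable one_le_two).const_mul _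
  have hcov : ∫ t, u t * (v t - m) ∂μ = ∫ t, u t * v t ∂μ := by
    simp only [mul_sub]
    rw [integral_sub huv ((hu.integrable one_le_two).mul_const m),
      integral_mul_const, hu0, zero_mul, sub_zero]
  have hvar : ∫ t, (v t - m) ^ 2 ∂μ = (∫ t, v t ^ 2 ∂μ) - m ^ 2 := by
    have hexpand : (fun t => (v t - m) ^ 2) = fun t => v t ^ 2 - (2 * m) * v t + m ^ 2 := by
      ext t; ring
    have hi : Integrable (fun t => v t ^ 2 - (2 * m) * v t) μ := hv.integrable_sq.sub hv1
    rw [hexpand, integral_add hi (integrable_const _),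
      integral_sub hv.integrable_sq hv1,
      integral_const_mul, integral_const]
    simp only [probReal_univ, smul_eq_mul, one_mul]
    ring
  rw [← hcov, ← hvar]
  exact sq_integral_mul_le hu (hv.sub (memLp_const m))

lemma one_le_integral_exp (hint : Integrable f μ) (hmean : ∫ t, f t ∂μ = 0)
    (hexp : Integrable (fun t => exp (f t)) μ) : 1 ≤ ∫ t, exp (f t) ∂μ := by
  have hint1 : Integrable (fun t => 1 + f t) μ := (integrable_const 1).add hint
  have h := integral_mono hint1 hexp fun t => by simpa [add_comm] using add_one_le_exp (f t)
  simpa [integral_add (integrable_const 1) hint, hmean] using h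

lemma integral_exp_mul_le (hf : Measurable f) (hint : Integrable f μ) (hmean : ∫ t, f t ∂μ = 0)
    (hexp : Integrable (fun t => exp (f t)) μ) {s : ℝ} (hs0 : 0 ≤ s) (hs1 : s ≤ 1) :
    ∫ t, exp (s * f t) ∂μ ≤ ∫ t, exp (f t) ∂μ := by
  have h := integral_mono (integrable_exp_mul hf hexp hs0 hs1)
    ((integrable_const (1 - s)).add (hexp.const_mul s)) fun t => exp_mul_le hs0 hs1 (f t)
  rw [integral_add' (integrable_const _) (hexp.const_mul s), integral_const_mul] at h
  simp only [integral_const, probReal_univ, smul_eq_mul, one_mul] at h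
  nlinarith [one_le_integral_exp hint hmean hexp]

lemma integral_mul_exp_sub_mul_log_le (hexp : Integrable (fun t => exp (f t)) μ)
    (hfexp : Integrable (fun t => f t * exp (f t)) μ) :
    (∫ t, f t * exp (f t) ∂μ) - (∫ t, exp (f t) ∂μ) * log (∫ t, exp (f t) ∂μ)
      ≤ ∫ t, (f t * exp (f t) - exp (f t) + 1) ∂μ := by
  have h := self_sub_one_le_mul_log
    (integral_nonneg fun t => (exp_pos (f t)).le : 0 ≤ ∫ t, exp (f t) ∂μ)
  have hsub : Integrable (fun t => f t * exp (f t) - exp (f t)) μ := hfexp.sub hexp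
  rw [integral_add hsub (integrable_const 1), integral_sub hfexp hexp]
  simp only [integral_const, probReal_univ, smul_eq_mul, one_mul]
  linarith

end Integrals

section SoftClip

noncomputable def softClip (ε x : ℝ) : ℝ := x / (1 + ε * x ^ 2)

variable {ε : ℝ}

lemma one_add_mul_sq_pos (hε : 0 ≤ ε) (x : ℝ) : 0 < 1 + ε * x ^ 2 := by positivity

lemma hasDerivAt_softClip (hε : 0 ≤ ε) (x : ℝ) :
    HasDerivAt (softClip ε) ((1 - ε * x ^ 2) / (1 + ε * x ^ 2) ^ 2) x := by
  have hD : HasDerivAt (fun x : ℝ => 1 + ε * x ^ 2) (ε * (2 * x)) x := by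
    simpa using ((hasDerivAt_pow 2 x).const_mul ε).const_add 1
  refine ((hasDerivAt_id' x).div hD (one_add_mul_sq_pos hε x).ne').congr_deriv ?_
  ring

lemma sq_deriv_softClip_le (hε : 0 ≤ ε) (x : ℝ) :
    ((1 - ε * x ^ 2) / (1 + ε * x ^ 2) ^ 2) ^ 2 ≤ 1 := by
  have hD := one_add_mul_sq_pos hε x
  rw [div_pow, div_le_one (by positivity)]
  have hnum : |1 - ε * x ^ 2| ≤ (1 + ε * x ^ 2) ^ 2 := by
    rw [abs_le]; constructor <;> nlinarith [mul_nonneg hε (sq_nonneg x)]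
  nlinarith [sq_abs (1 - ε * x ^ 2), abs_nonneg (1 - ε * x ^ 2)]

lemma abs_softClip_le (hε : 0 ≤ ε) (x : ℝ) : |softClip ε x| ≤ |x| := by
  rw [softClip, abs_div, abs_of_pos (one_add_mul_sq_pos hε x)]
  exact div_le_self (abs_nonneg x) (by nlinarith [mul_nonneg hε (sq_nonneg x)])

lemma abs_softClip_le_inv (hε : 0 < ε) (hε1 : ε ≤ 1) (x : ℝ) : |softClip ε x| ≤ ε⁻¹ := by
  have hD := one_add_mul_sq_pos hε.le x
  rw [softClip, abs_div, abs_of_pos hD, div_le_iff₀ hD,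
    inv_mul_eq_div, le_div_iff₀ hε]
  nlinarith [abs_nonneg x, sq_abs x, sq_nonneg (|x| - 1)]

lemma tendsto_softClip (x : ℝ) :
    Tendsto (fun n : ℕ => softClip (1 / ((n : ℝ) + 1)) x) atTop (𝓝 x) := by
  have hcont : ContinuousAt (fun ε : ℝ => softClip ε x) 0 :=
    continuousAt_const.div (by fun_prop) (by simp)
  simpa [softClip, Function.comp_def] using
    hcont.tendsto.comp tendsto_one_div_add_atTop_nhds_zero_nat

end SoftClip

lemma sq_le_of_bobkovLedoux_estimates {β x e T M : ℝ} (hβ0 : 0 ≤ β) (hβ2 : β < 2) (hx : 0 ≤ x)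
    (he : 0 ≤ e) (hT : T ^ 2 ≤ β ^ 2 * (β ^ 2 / 4 * e ^ 2)) (hM : M ≤ x * e)
    (hK : x ^ 2 - T ^ 2 ≤ β ^ 2 * (e ^ 2 + M + x ^ 2 / 4)) :
    x ^ 2 ≤ β ^ 2 * ((2 + β) / (2 - β)) ^ 2 * e ^ 2 := by
  -- By `hM`, `e ^ 2 + M + x ^ 2 / 4 ≤ (e + x / 2) ^ 2`, so `x ^ 2` is at most a sum of two squares.
  have hsq : x ^ 2 ≤ (β ^ 2 * e / 2 + β * (e + x / 2)) ^ 2 := by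
    nlinarith [mul_le_mul_of_nonneg_left hM (sq_nonneg β),
      mul_nonneg (mul_nonneg (sq_nonneg β) he) (mul_nonneg hβ0 (by positivity : 0 ≤ e + x / 2))]
  have hlin : x ≤ β ^ 2 * e / 2 + β * (e + x / 2) :=
    (pow_le_pow_iff_left₀ hx (by positivity) two_ne_zero).1 hsq
  have hx' : x ≤ β * ((2 + β) / (2 - β)) * e := by
    rw [mul_div_assoc', div_mul_eq_mul_div, le_div_iff₀ (by linarith)]
    nlinarith
  calc x ^ 2 ≤ (β * ((2 + β) / (2 - β)) * e) ^ 2 := pow_le_pow_left₀ hx hx' 2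
    _ = β ^ 2 * ((2 + β) / (2 - β)) ^ 2 * e ^ 2 := by ring

namespace PoincareInequality

variable {ι : Type*} [Fintype ι] [DecidableEq ι] {μ : Measure (ι → ℝ)} {C : ℝ}

lemma variance_le_of_gradNormSq_le (hP : PoincareInequality μ C) (hC : 0 ≤ C)
    {h G : (ι → ℝ) → ℝ} (hh : Differentiable ℝ h) (hL2 : MemLp h 2 μ) (hG : Integrable G μ)
    (hbound : ∀ t, gradNormSq h t ≤ G t) :
    (∫ t, h t ^ 2 ∂μ) - (∫ t, h t ∂μ) ^ 2 ≤ C * ∫ t, G t ∂μ :=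
  (hP h hh hL2).trans <| mul_le_mul_of_nonneg_left
    (integral_mono_of_nonneg (.of_forall (gradNormSq_nonneg h)) hG (.of_forall hbound)) hC

lemma variance_comp_le (hP : PoincareInequality μ C) (hC : 0 ≤ C) {g : (ι → ℝ) → ℝ}
    (hg : Differentiable ℝ g) {c : ℝ} (hgrad : ∀ t, gradNormSq g t ≤ c ^ 2) {φ φ' : ℝ → ℝ}
    (hφ : ∀ y, HasDerivAt φ (φ' y) y) (hL2 : MemLp (fun t => φ (g t)) 2 μ)
    (hφ' : Integrable (fun t => φ' (g t) ^ 2) μ) :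
    (∫ t, φ (g t) ^ 2 ∂μ) - (∫ t, φ (g t) ∂μ) ^ 2 ≤ C * c ^ 2 * ∫ t, φ' (g t) ^ 2 ∂μ := by
  have := hP.variance_le_of_gradNormSq_le (h := fun t => φ (g t)) hC
    (fun t => (hφ (g t)).differentiableAt.comp t (hg t)) hL2
    (hφ'.const_mul (c ^ 2)) fun t => by
      rw [gradNormSq_comp (hφ (g t)) (hg t), mul_comm (c ^ 2)]
      exact mul_le_mul_of_nonneg_left (hgrad t) (sq_nonneg _)
  rwa [integral_const_mul, ← mul_assoc] at this

variable [IsProbabilityMeasure μ]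

lemma memLp_two_and_variance_le (hP : PoincareInequality μ C) (hC : 0 ≤ C)
    {h : (ι → ℝ) → ℝ} (hh : Differentiable ℝ h) (hint : Integrable h μ) {a : ℝ}
    (hgrad : ∀ t, gradNormSq h t ≤ a ^ 2) :
    MemLp h 2 μ ∧ (∫ t, h t ^ 2 ∂μ) - (∫ t, h t ∂μ) ^ 2 ≤ C * a ^ 2 := by
  set ε : ℕ → ℝ := fun n => 1 / ((n : ℝ) + 1)
  have hε : ∀ n, 0 < ε n := fun n => by positivity
  have hε1 : ∀ n, ε n ≤ 1 := fun n => div_le_one_of_le₀ (by simp) (by positivity)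
  set F : ℕ → (ι → ℝ) → ℝ := fun n t => softClip (ε n) (h t)
  have hFdiff : ∀ n, Differentiable ℝ (F n) := fun n t =>
    ((hasDerivAt_softClip (hε n).le (h t)).differentiableAt).comp t (hh t)
  have hFmeas : ∀ n, AEStronglyMeasurable (F n) μ := fun n =>
    (hFdiff n).continuous.aestronglyMeasurable
  have hFL2 : ∀ n, MemLp (F n) 2 μ := fun n =>
    MemLp.of_bound (hFmeas n) (ε n)⁻¹ (.of_forall fun t => abs_softClip_le_inv (hε n) (hε1 n) _)
  have hFvar : ∀ n, ∫ t, F n t ^ 2 ∂μ ≤ C * a ^ 2 + (∫ t, F n t ∂μ) ^ 2 := fun n => by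
    have := hP.variance_le_of_gradNormSq_le hC (hFdiff n) (hFL2 n) (integrable_const (a ^ 2))
      fun t => gradNormSq_comp_le (hasDerivAt_softClip (hε n).le (h t)) (hh t)
        (sq_deriv_softClip_le (hε n).le (h t)) (hgrad t)
    simp only [integral_const, probReal_univ, smul_eq_mul, one_mul] at this
    linarith
  have hFmean : Tendsto (fun n => ∫ t, F n t ∂μ) atTop (𝓝 (∫ t, h t ∂μ)) :=
    tendsto_integral_of_dominated_convergence (fun t => |h t|) hFmeas hint.abs
      (fun n => .of_forall fun t => abs_softClip_le (hε n).le (h t))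
      (.of_forall fun t => tendsto_softClip (h t))
  obtain ⟨hint2, hle⟩ := integrable_and_integral_le_of_tendsto (fun n => (hFL2 n).integrable_sq)
    (fun n => .of_forall fun t => sq_nonneg (F n t))
    (.of_forall fun t => (tendsto_softClip (h t)).pow 2) ((hFmean.pow 2).const_add (C * a ^ 2))
    hFvar
  exact ⟨(memLp_two_iff_integrable_sq hint.1).2 hint2, by linarith⟩

lemma integral_sq_mul_exp_le (hP : PoincareInequality μ C) (hC : 0 ≤ C)
    {g : (ι → ℝ) → ℝ} (hg : Differentiable ℝ g) (hint : Integrable g μ)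
    (hmean : ∫ t, g t ∂μ = 0) {c : ℝ} (hc : 0 ≤ c) (hcC : c * √C < 2)
    (hgrad : ∀ t, gradNormSq g t ≤ c ^ 2) (hexp : Integrable (fun t => exp (g t)) μ)
    (hsq : Integrable (fun t => g t ^ 2 * exp (g t)) μ) :
    ∫ t, g t ^ 2 * exp (g t) ∂μ
      ≤ C * c ^ 2 * ((2 + c * √C) / (2 - c * √C)) ^ 2 * ∫ t, exp (g t) ∂μ := by
  set β := c * √C
  have hβ : C * c ^ 2 = β ^ 2 := by rw [mul_pow, sq_sqrt hC]; ring
  set E := ∫ t, exp (g t) ∂μ with hE_def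
  set K := ∫ t, g t ^ 2 * exp (g t) ∂μ with hK_def
  set M := ∫ t, g t * exp (g t) ∂μ with hM_def
  set T := ∫ t, g t * exp (g t / 2) ∂μ
  have hE : 0 ≤ E := integral_nonneg fun t => (exp_pos _).le
  have hK : 0 ≤ K := integral_nonneg fun t => by positivity
  have hv_sq : ∀ y, exp (y / 2) ^ 2 = exp y := fun y => by rw [← exp_nat_mul]; ring_nf
  have hcont := hg.continuous
  have hvL2 : MemLp (fun t => exp (g t / 2)) 2 μ :=
    (memLp_two_iff_integrable_sq (by fun_prop)).2 (by simpa only [hv_sq] using hexp)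
  have huL2 : MemLp (fun t => g t * exp (g t / 2)) 2 μ :=
    (memLp_two_iff_integrable_sq (by fun_prop)).2 (by simpa only [mul_pow, hv_sq] using hsq)
  have huv : ∀ t, g t * exp (g t / 2) * exp (g t / 2) = g t * exp (g t) := fun t => by
    rw [mul_assoc, ← sq, hv_sq]
  have hM_int : Integrable (fun t => g t * exp (g t)) μ :=
    (huL2.integrable_mul hvL2).congr (.of_forall huv)
  obtain ⟨hgL2, hgvar⟩ := hP.memLp_two_and_variance_le hC hg hint hgrad
  have hv : ∀ y : ℝ, HasDerivAt (fun y => exp (y / 2)) (exp (y / 2) / 2) y := fun y => by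
    simpa [div_eq_mul_inv, mul_comm] using ((hasDerivAt_id' y).div_const 2).exp
  have hvar_v : E - (∫ t, exp (g t / 2) ∂μ) ^ 2 ≤ β ^ 2 / 4 * E := by
    have := hP.variance_comp_le hC hg hgrad hv hvL2
      (by simpa only [div_pow, hv_sq] using hexp.div_const (2 ^ 2))
    simp only [div_pow, hv_sq, integral_div, ← hE_def, hβ] at this
    linarith
  have hT : T ^ 2 ≤ β ^ 2 * (β ^ 2 / 4 * √E ^ 2) := by
    rw [sq_sqrt hE]
    have hvar_nonneg : 0 ≤ E - (∫ t, exp (g t / 2) ∂μ) ^ 2 := by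
      have := sq_integral_mul_le (μ := μ) hvL2 (memLp_const 1)
      simp only [mul_one, hv_sq, one_pow, integral_const, probReal_univ, smul_eq_mul] at this
      linarith
    calc T ^ 2 ≤ (∫ t, g t ^ 2 ∂μ) * (E - (∫ t, exp (g t / 2) ∂μ) ^ 2) := by
          simpa only [hv_sq] using sq_integral_mul_le_of_integral_eq_zero hgL2 hmean hvL2
      _ ≤ β ^ 2 * (β ^ 2 / 4 * E) := by
          rw [hmean, hβ] at hgvar
          gcongr
          linarith
  have hM : M ≤ √K * √E := by
    refine le_of_abs_le (abs_le_of_sq_le_sq ?_ (by positivity))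
    rw [mul_pow, sq_sqrt hK, sq_sqrt hE]
    simpa only [huv, mul_pow, hv_sq] using sq_integral_mul_le huL2 hvL2
  have hu : ∀ y : ℝ, HasDerivAt (fun y => y * exp (y / 2)) ((1 + y / 2) * exp (y / 2)) y :=
    fun y => ((hasDerivAt_id' y).mul (hv y)).congr_deriv (by ring)
  have hu' : ∀ t, ((1 + g t / 2) * exp (g t / 2)) ^ 2
      = exp (g t) + g t * exp (g t) + g t ^ 2 * exp (g t) / 4 := fun t => by
    rw [mul_pow, hv_sq]; ring
  have hKM : √K ^ 2 - T ^ 2 ≤ β ^ 2 * (√E ^ 2 + M + √K ^ 2 / 4) := by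
    have hi : Integrable (fun t => exp (g t) + g t * exp (g t)) μ := hexp.add hM_int
    have hi' : Integrable (fun t => exp (g t) + g t * exp (g t) + g t ^ 2 * exp (g t) / 4) μ :=
      hi.add (hsq.div_const 4)
    have := hP.variance_comp_le hC hg hgrad hu huL2 (by simpa only [hu'] using hi')
    simp only [hu', mul_pow, hv_sq] at this
    rw [integral_add hi (hsq.div_const 4), integral_add hexp hM_int, integral_div, ← hE_def,
      ← hK_def, ← hM_def, hβ] at this
    rw [sq_sqrt hK, sq_sqrt hE]
    linarith
  have := sq_le_of_bobkovLedoux_estimates (by positivity) hcC (sqrt_nonneg K) (sqrt_nonneg E)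
    hT hM hKM
  rwa [sq_sqrt hK, sq_sqrt hE, ← hβ] at this

lemma integral_sq_mul_exp_mul_le (hP : PoincareInequality μ C) (hC : 0 ≤ C)
    {f : (ι → ℝ) → ℝ} (hf : Differentiable ℝ f) (hint : Integrable f μ)
    (hmean : ∫ t, f t ∂μ = 0) {a : ℝ} (ha0 : 0 ≤ a) (ha : a * √C < 2)
    (hgrad : ∀ t, gradNormSq f t ≤ a ^ 2) (hexp : Integrable (fun t => exp (f t)) μ)
    {s : ℝ} (hs0 : 0 < s) (hs1 : s < 1) :
    ∫ t, f t ^ 2 * exp (s * f t) ∂μ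
      ≤ C * a ^ 2 * ((2 + a * √C) / (2 - a * √C)) ^ 2 * ∫ t, exp (f t) ∂μ := by
  have hfm : Measurable f := hf.continuous.measurable
  have hsa : s * a * √C ≤ a * √C := by
    have : 0 ≤ a * √C := by positivity
    nlinarith
  have hscale : ∀ t, (s * f t) ^ 2 * exp (s * f t) = s ^ 2 * (f t ^ 2 * exp (s * f t)) :=
    fun t => by ring
  have hf2 := (hP.memLp_two_and_variance_le hC hf hint hgrad).1.integrable_sq
  have hBL := hP.integral_sq_mul_exp_le hC (hf.const_mul s) (hint.const_mul s)
    (by rw [integral_const_mul, hmean, mul_zero]) (by positivity : 0 ≤ s * a) (hsa.trans_lt ha)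
    (fun t => by
      rw [gradNormSq_comp ((hasDerivAt_id' (f t)).const_mul s) (hf t), mul_one, mul_pow]
      exact mul_le_mul_of_nonneg_left (hgrad t) (sq_nonneg s))
    (integrable_exp_mul hfm hexp hs0.le hs1.le)
    (by simpa only [hscale] using
      (integrable_sq_mul_exp_mul hfm hf2 hexp hs0.le hs1).const_mul (s ^ 2))
  simp only [hscale, integral_const_mul] at hBL
  have hE := integral_exp_mul_le hfm hint hmean hexp hs0.le hs1.le
  refine le_of_mul_le_mul_left (hBL.trans ?_) (by positivity : 0 < s ^ 2)
  calc C * (s * a) ^ 2 * ((2 + s * a * √C) / (2 - s * a * √C)) ^ 2 * ∫ t, exp (s * f t) ∂μ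
      ≤ C * (s * a) ^ 2 * ((2 + a * √C) / (2 - a * √C)) ^ 2 * ∫ t, exp (f t) ∂μ := by
        gcongr
        exact div_nonneg (by positivity) (by linarith)
    _ = _ := by ring

end PoincareInequality

/-- Modified log-Sobolev inequality from a Poincaré inequality: if `μ` satisfies
`Var_μ(h) ≤ C ∫ ‖∇h‖² dμ`, `∫ f dμ = 0` and `‖∇f‖ ≤ a < 2/√C`, then
`Ent_μ(e^f) ≤ (a²C/2)((2+a√C)/(2-a√C))² ∫ e^f dμ`. -/
theorem stmt_18 {m : ℕ} (μ : Measure (Fin m → ℝ)) (hprob : IsProbabilityMeasure μ)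
    (C : ℝ) (hC : 0 < C)
    (hP : ∀ h : (Fin m → ℝ) → ℝ, Differentiable ℝ h → MemLp h 2 μ →
      (∫ t, (h t) ^ 2 ∂μ) - (∫ t, h t ∂μ) ^ 2
        ≤ C * ∫ t, (∑ i : Fin m, (fderiv ℝ h t (Pi.single i 1)) ^ 2) ∂μ)
    (f : (Fin m → ℝ) → ℝ) (hf : Differentiable ℝ f)
    (hmean : (∫ t, f t ∂μ) = 0)
    (a : ℝ) (ha0 : 0 < a) (ha : a < 2 / Real.sqrt C)
    (hgrad : ∀ t, (∑ i : Fin m, (fderiv ℝ f t (Pi.single i 1)) ^ 2) ≤ a ^ 2)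
    (hint0 : Integrable f μ)
    (hint1 : Integrable (fun t => Real.exp (f t)) μ)
    (hint2 : Integrable (fun t => f t * Real.exp (f t)) μ) :
    (∫ t, f t * Real.exp (f t) ∂μ)
        - (∫ t, Real.exp (f t) ∂μ) * Real.log (∫ t, Real.exp (f t) ∂μ)
      ≤ (a ^ 2 * C / 2) * ((2 + a * Real.sqrt C) / (2 - a * Real.sqrt C)) ^ 2 *
          ∫ t, Real.exp (f t) ∂μ := by
  have hP' : PoincareInequality μ C := hP
  have haC : a * √C < 2 := by rwa [lt_div_iff₀ (sqrt_pos.2 hC)] at ha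
  calc _ ≤ ∫ t, (f t * exp (f t) - exp (f t) + 1) ∂μ :=
        integral_mul_exp_sub_mul_log_le hint1 hint2
    _ ≤ C * a ^ 2 * ((2 + a * √C) / (2 - a * √C)) ^ 2 * (∫ t, exp (f t) ∂μ) / 2 :=
        integral_mul_exp_sub_exp_add_one_le hf.continuous.measurable hint1 hint2 fun s hs =>
          hP'.integral_sq_mul_exp_mul_le hC.le hf hint0 hmean ha0.le haC hgrad hint1 hs.1 hs.2
    _ = _ := by ring
end
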